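/- For every positive integer l and every real number s with s ∉ {0, −1, l}, the single-site gauge identity holds: ((q^{s} − q^{−s}) / (q^{s−l} − q^{−(s−l)})) · (1 − [l][l+1] ξ(2s)) = (q^{s+l+1} − q^{−(s+l+1)}) / (q^{s+1} − q^{−(s+1)}). -/

import Mathlib

/-- The symmetric q-integer `[m] = (q^m - q^{-m})/(q - q⁻¹)` (real powers). -/
noncomputable def qint (q : ℝ) (m : ℤ) : ℝ :=
  (q ^ (m : ℝ) - q ^ (-(m : ℝ))) / (q - q⁻¹)

/-- `ξ(y) = (q - q⁻¹)² q^{y+1} / ((q^y - 1)(q^{y+2} - 1))`. -/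
noncomputable def xi (q y : ℝ) : ℝ :=
  (q - q⁻¹) ^ 2 * q ^ (y + 1) / ((q ^ y - 1) * (q ^ (y + 2) - 1))


private lemma sq_eq_one_pos {x : ℝ} (hx : 0 < x) (h : x ^ 2 = 1) : x = 1 := by
  have h3 : (x - 1) * (x + 1) = 0 := by nlinarith
  rcases mul_eq_zero.mp h3 with h' | h'
  · linarith
  · linarith

set_option maxHeartbeats 2000000 in
/-- the single-site gauge identity
`((q^s - q^{-s})/(q^{s-l} - q^{-(s-l)})) (1 - [l][l+1] ξ(2s))
    = (q^{s+l+1} - q^{-(s+l+1)})/(q^{s+1} - q^{-(s+1)})`. -/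
theorem single_site_gauge_identity (q : ℝ) (hq : 0 < q) (hq1 : q ≠ 1)
    (l : ℕ) (hl : 0 < l) (s : ℝ) (hs0 : s ≠ 0) (hs1 : s ≠ -1) (hsl : s ≠ (l : ℝ)) :
    (q ^ s - q ^ (-s)) / (q ^ (s - l) - q ^ (-(s - (l : ℝ)))) *
        (1 - qint q l * qint q (l + 1) * xi q (2 * s)) =
      (q ^ (s + l + 1) - q ^ (-(s + (l : ℝ) + 1))) / (q ^ (s + 1) - q ^ (-(s + 1))) := by
  have hq0 : q ≠ 0 := ne_of_gt hq
  have hinj : ∀ a b : ℝ, q ^ a = q ^ b → a = b := by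
    intro a b h
    rw [Real.rpow_def_of_pos hq, Real.rpow_def_of_pos hq, Real.exp_eq_exp] at h
    have hlog : Real.log q ≠ 0 := by
      intro h0
      rcases Real.log_eq_zero.mp h0 with h' | h' | h' <;> simp_all <;> linarith
    exact mul_left_cancel₀ hlog h
  set t : ℝ := q ^ s with ht
  set u : ℝ := q ^ (l : ℝ) with hu
  have htpos : 0 < t := Real.rpow_pos_of_pos hq s
  have hupos : 0 < u := Real.rpow_pos_of_pos hq (l : ℝ)
  have ht0 : t ≠ 0 := ne_of_gt htpos
  have hu0 : u ≠ 0 := ne_of_gt hupos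
  -- rewrite all rpow's
  have e1 : q ^ (-s) = t⁻¹ := by rw [Real.rpow_neg hq.le, ht]
  have e2 : q ^ (s - (l : ℝ)) = t / u := by rw [Real.rpow_sub hq]
  have e3 : q ^ (-(s - (l : ℝ))) = (t / u)⁻¹ := by rw [Real.rpow_neg hq.le, e2]
  have e4 : q ^ (s + (l : ℝ) + 1) = t * u * q := by
    rw [Real.rpow_add hq, Real.rpow_add hq, Real.rpow_one]
  have e5 : q ^ (-(s + (l : ℝ) + 1)) = (t * u * q)⁻¹ := by rw [Real.rpow_neg hq.le, e4]
  have e6 : q ^ (s + 1) = t * q := by rw [Real.rpow_add hq, Real.rpow_one]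
  have e7 : q ^ (-(s + 1)) = (t * q)⁻¹ := by rw [Real.rpow_neg hq.le, e6]
  have e8 : q ^ (2 * s) = t ^ 2 := by
    rw [mul_comm, Real.rpow_mul hq.le, ht]
    norm_num [Real.rpow_two]
  have e9 : q ^ (2 * s + 1) = t ^ 2 * q := by rw [Real.rpow_add hq, Real.rpow_one, e8]
  have e10 : q ^ (2 * s + 2) = t ^ 2 * q ^ 2 := by
    rw [Real.rpow_add hq, e8, Real.rpow_two]
  have eqi1 : qint q l = (u - u⁻¹) / (q - q⁻¹) := by
    rw [qint]
    push_cast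
    rw [Real.rpow_neg hq.le, ← hu]
  have eqi2 : qint q (l + 1) = (u * q - (u * q)⁻¹) / (q - q⁻¹) := by
    rw [qint]
    push_cast
    rw [Real.rpow_neg hq.le, Real.rpow_add hq, Real.rpow_one, ← hu]
  have exi : xi q (2 * s) = (q - q⁻¹) ^ 2 * (t ^ 2 * q) / ((t ^ 2 - 1) * (t ^ 2 * q ^ 2 - 1)) := by
    rw [xi, e9, e8, e10]
  -- nonvanishing facts
  have hqq : q - q⁻¹ ≠ 0 := by
    intro h
    have h2 : q ^ 2 = 1 := by field_simp at h; nlinarith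
    exact hq1 (sq_eq_one_pos hq h2)
  have htne : t ≠ 1 := by
    intro h
    apply hs0
    have : q ^ s = q ^ (0 : ℝ) := by rw [Real.rpow_zero]; exact h
    exact hinj s 0 this
  have ht21 : t ^ 2 - 1 ≠ 0 := by
    intro h
    have h2 : t ^ 2 = 1 := by linarith
    exact htne (sq_eq_one_pos htpos h2)
  have htq1 : t * q ≠ 1 := by
    intro h
    apply hs1
    have : q ^ (s + 1) = q ^ (0 : ℝ) := by rw [Real.rpow_zero, e6]; exact h
    linarith [hinj (s + 1) 0 this]
  have ht2q21 : t ^ 2 * q ^ 2 - 1 ≠ 0 := by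
    intro h
    have h2 : (t * q) ^ 2 = 1 := by ring_nf; ring_nf at h; linarith
    exact htq1 (sq_eq_one_pos (by positivity) h2)
  have htu : t ≠ u := by
    intro h
    exact hsl (hinj s (l : ℝ) (by rw [← ht, ← hu, h]))
  have hden1 : t / u - (t / u)⁻¹ ≠ 0 := by
    intro h
    have h2 : (t / u) ^ 2 = 1 := by field_simp at h ⊢; nlinarith
    have h' := sq_eq_one_pos (div_pos htpos hupos) h2
    exact htu (by field_simp at h'; linarith)
  have hden2 : t * q - (t * q)⁻¹ ≠ 0 := by
    intro h
    have h2 : (t * q) ^ 2 = 1 := by field_simp at h; nlinarith [h]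
    exact htq1 (sq_eq_one_pos (by positivity) h2)
  have ht1 : t - t⁻¹ ≠ 0 := by
    intro h
    have h2 : t ^ 2 = 1 := by field_simp at h; nlinarith [h]
    exact htne (sq_eq_one_pos htpos h2)
  have hq21 : q ^ 2 - 1 ≠ 0 := by
    intro h
    exact hq1 (sq_eq_one_pos hq (by linarith))
  have htu2 : t ^ 2 - u ^ 2 ≠ 0 := by
    intro h
    have h2 : (t / u) ^ 2 = 1 := by field_simp; nlinarith
    exact htu (by have := sq_eq_one_pos (div_pos htpos hupos) h2; field_simp at this; linarith)
  have f1 : t - t⁻¹ = (t ^ 2 - 1) / t := by field_simp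
  have f2 : t * q - (t * q)⁻¹ = (t ^ 2 * q ^ 2 - 1) / (t * q) := by
    field_simp
  have f3 : t / u - (t / u)⁻¹ = (t ^ 2 - u ^ 2) / (t * u) := by
    rw [inv_div]; field_simp
  have f4 : t * u * q - (t * u * q)⁻¹ = (t ^ 2 * u ^ 2 * q ^ 2 - 1) / (t * u * q) := by
    field_simp
  have f5 : u - u⁻¹ = (u ^ 2 - 1) / u := by field_simp
  have f6 : u * q - (u * q)⁻¹ = (u ^ 2 * q ^ 2 - 1) / (u * q) := by
    field_simp
  have f7 : q - q⁻¹ = (q ^ 2 - 1) / q := by field_simp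
  rw [e1, e2, e3, e4, e5, e6, e7, eqi1, eqi2, exi, f1, f2, f3, f4, f5, f6, f7]
  field_simp
  ring
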